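/- Let A and B be infinite finitely generated groups and let G = A × B, with finite generating set S (for instance S_A × {1} ∪ {1} × S_B for finite generating sets S_A of A and S_B of B). Then for every Floyd function f, the Floyd boundary of the Cayley graph Cay(G,S) based at the identity consists of exactly one point. -/

import Mathlib

open Filter
open scoped ENNReal

universe u

namespace FloydPaper

/-- A **Floyd function**: `f : {1,2,...} → (0,∞)` (modelled as `f : ℕ → ℝ` with `f 0 := f 1`)
such that there is `K ≥ 1` with `1 ≤ f n / f (n+1) ≤ K` for all `n ≥ 1`, and `∑ f n < ∞`. -/
structure IsFloydFunction (f : ℕ → ℝ) : Prop where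
  pos : ∀ n : ℕ, 0 < f n
  zero_eq : f 0 = f 1
  ratio : ∃ K : ℝ, 1 ≤ K ∧ ∀ n : ℕ, 1 ≤ n → 1 ≤ f n / f (n + 1) ∧ f n / f (n + 1) ≤ K
  summable : Summable fun n : ℕ => f (n + 1)

variable {V : Type u}

/-- The Floyd length of an (oriented) edge: `f` applied to the graph distance from the
basepoint `b` to the nearer endpoint of the edge. -/
noncomputable def edgeFloydLength (G : SimpleGraph V) (f : ℕ → ℝ) (b : V) (e : G.Dart) : ℝ :=
  f (min (G.dist b e.toProd.1) (G.dist b e.toProd.2))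

/-- The Floyd length of an edge path (walk): the sum of the Floyd lengths of its edges. -/
noncomputable def floydLength (G : SimpleGraph V) (f : ℕ → ℝ) (b : V) {u v : V}
    (p : G.Walk u v) : ℝ :=
  (p.darts.map (edgeFloydLength G f b)).sum

/-- The Floyd distance between two vertices: the infimum of the Floyd lengths of edge paths
joining them. -/
noncomputable def floydDist (G : SimpleGraph V) (f : ℕ → ℝ) (b : V) (u v : V) : ℝ :=
  sInf {L : ℝ | ∃ p : G.Walk u v, floydLength G f b p = L}

/-- An edge path `p` is a `C`-quasi-geodesic if for all vertices `v, v'` on `p`,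
`(1/C) d(v,v') - C ≤ |p(v,v')| ≤ C d(v,v') + C`, where `|p(v,v')|` is the number of edges of
the subpath of `p` between them. -/
def IsQuasiGeodesicWalk (G : SimpleGraph V) (C : ℝ) {u v : V} (p : G.Walk u v) : Prop :=
  ∀ i j : ℕ, i ≤ j → j ≤ p.length →
    (1 / C) * (G.dist (p.getVert i) (p.getVert j) : ℝ) - C ≤ ((j : ℝ) - (i : ℝ)) ∧
      ((j : ℝ) - (i : ℝ)) ≤ C * (G.dist (p.getVert i) (p.getVert j) : ℝ) + C

/-- A sequence of vertices escapes to infinity if it eventually leaves every ball about the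
basepoint. -/
def Escapes (G : SimpleGraph V) (b : V) (s : ℕ → V) : Prop :=
  ∀ n : ℕ, ∃ N : ℕ, ∀ m : ℕ, N ≤ m → n < G.dist b (s m)

/-- A sequence of vertices is Cauchy for the Floyd distance. -/
def IsFloydCauchy (G : SimpleGraph V) (f : ℕ → ℝ) (b : V) (s : ℕ → V) : Prop :=
  ∀ ε : ℝ, 0 < ε → ∃ N : ℕ, ∀ m n : ℕ, N ≤ m → N ≤ n →
    floydDist G f b (s m) (s n) < ε

/-- The sequences representing points of the Floyd boundary: Floyd-Cauchy sequences escaping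
to infinity (for an infinite, connected, locally finite graph these are exactly the Cauchy
sequences with no limit in the vertex set, since vertices are isolated in the Floyd metric). -/
def BoundarySeq (G : SimpleGraph V) (f : ℕ → ℝ) (b : V) : Type u :=
  {s : ℕ → V // IsFloydCauchy G f b s ∧ Escapes G b s}

/-- Two boundary sequences represent the same boundary point iff the Floyd distance between
them tends to `0`. -/
def BoundaryRel (G : SimpleGraph V) (f : ℕ → ℝ) (b : V)
    (s t : BoundarySeq G f b) : Prop :=
  Tendsto (fun n => floydDist G f b (s.1 n) (t.1 n)) atTop (nhds 0)

/-- The Floyd boundary `∂_f X`: the set of points of the Cauchy completion of the vertex set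
with the Floyd metric which do not lie in the vertex set. -/
def FloydBoundary (G : SimpleGraph V) (f : ℕ → ℝ) (b : V) : Type u :=
  Quot (BoundaryRel G f b)

/-- The Floyd boundary consists of exactly one point. -/
def FloydBoundaryOnePoint (G : SimpleGraph V) (f : ℕ → ℝ) (b : V) : Prop :=
  ∃ p : FloydBoundary G f b, ∀ q : FloydBoundary G f b, q = p

/-- The Floyd boundary is trivial: it has at most two points. -/
def FloydBoundaryTrivial (G : SimpleGraph V) (f : ℕ → ℝ) (b : V) : Prop :=
  ∀ p q r : FloydBoundary G f b, p = q ∨ p = r ∨ q = r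

/-- The divergence function `Div_{X,γ,δ}(n)` of a graph: the sup over triples `x, y, c` of
vertices with `r := d(c,{x,y}) > 0` and `d(x,y) ≤ n` of the infimum of the lengths of edge
paths from `x` to `y` avoiding the ball of radius `δr - γ` about `c` (`∞` if none exists). -/
noncomputable def graphDivergence (G : SimpleGraph V) (γ δ : ℝ) (n : ℕ) : ℝ≥0∞ :=
  ⨆ x : V, ⨆ y : V, ⨆ c : V,
    ⨆ _ : 0 < min (G.dist c x) (G.dist c y) ∧ G.dist x y ≤ n,
      ⨅ p : {p : G.Walk x y // ∀ z ∈ p.support,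
          δ * (↑(min (G.dist c x) (G.dist c y)) : ℝ) - γ < (G.dist c z : ℝ)},
        (p.1.length : ℝ≥0∞)

/-- `α : ℝ → X` is a (bi-infinite) `C`-quasi-geodesic for the distance function `d`. -/
def IsQuasiGeodesicMap {X : Type u} (d : X → X → ℝ) (C : ℝ) (α : ℝ → X) : Prop :=
  ∀ s t : ℝ, (1 / C) * |s - t| - C ≤ d (α s) (α t) ∧ d (α s) (α t) ≤ C * |s - t| + C

/-- `α : [0,∞) → X` is a `C`-quasi-geodesic ray for the distance function `d`. -/
def IsQuasiGeodesicRay {X : Type u} (d : X → X → ℝ) (C : ℝ) (α : ℝ → X) : Prop :=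
  ∀ s t : ℝ, 0 ≤ s → 0 ≤ t →
    (1 / C) * |s - t| - C ≤ d (α s) (α t) ∧ d (α s) (α t) ≤ C * |s - t| + C

/-- The length of a discrete path (chain) in a space with distance function `d`. -/
noncomputable def chainLength {X : Type u} (d : X → X → ℝ) (p : List X) : ℝ :=
  ((p.zip p.tail).map fun q => d q.1 q.2).sum

/-- The divergence function of a metric space (with distance function `d`), where paths are
taken to be discrete paths with steps of size at most `1` (for a graph these correspond to
edge paths). -/
noncomputable def divergence {X : Type u} (d : X → X → ℝ) (γ δ : ℝ) (n : ℕ) : ℝ≥0∞ :=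
  ⨆ x : X, ⨆ y : X, ⨆ c : X,
    ⨆ _ : 0 < min (d c x) (d c y) ∧ d x y ≤ (n : ℝ),
      ⨅ p : {p : List X // p.Chain' (fun w z => d w z ≤ 1) ∧ p.head? = some x ∧
          p.getLast? = some y ∧ ∀ z ∈ p, δ * min (d c x) (d c y) - γ < d c z},
        ENNReal.ofReal (chainLength d p.1)

/-- A space is `C`-wide if every point is within `C` of a bi-infinite `C`-quasi-geodesic and
its divergence is bounded above by a linear function for some `0 < δ < 1`, `γ ≥ 0`. -/
def IsWide (X : Type u) (d : X → X → ℝ) (C : ℝ) : Prop :=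
  (∀ x : X, ∃ α : ℝ → X, IsQuasiGeodesicMap d C α ∧ ∃ t : ℝ, d x (α t) ≤ C) ∧
  ∃ δ γ : ℝ, 0 < δ ∧ δ < 1 ∧ 0 ≤ γ ∧
    ∃ A B : ℝ, ∀ n : ℕ, divergence d γ δ n ≤ ENNReal.ofReal (A * n + B)

/-- The induced distance function on a subset. -/
def restrictDist {X : Type u} (d : X → X → ℝ) (Y : Set X) : ↥Y → ↥Y → ℝ :=
  fun a b => d a b

/-- A subset has infinite diameter. -/
def InfiniteDiam {X : Type u} (d : X → X → ℝ) (S : Set X) : Prop :=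
  ∀ M : ℝ, ∃ x ∈ S, ∃ y ∈ S, M < d x y

/-- `X` is `C`-thick of order at most `k`: thick of order `0` means wide, and thick of order
at most `k+1` means there is a collection `𝒴` of subsets whose `C`-neighborhoods cover `X`,
each of which is `C`-thick of order at most `k` in the induced metric, and any two of which
are connected by a finite chain of members of `𝒴` with consecutive ones having
infinite-diameter intersection `N_C(Y_i) ∩ Y_{i+1}`. -/
def IsThickLE : ℕ → (X : Type u) → (X → X → ℝ) → ℝ → Prop
  | 0, X, d, C => IsWide X d C
  | k + 1, X, d, C =>
      ∃ 𝒴 : Set (Set X),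
        (∀ x : X, ∃ Y ∈ 𝒴, ∃ y ∈ Y, d x y ≤ C) ∧
        (∀ Y ∈ 𝒴, IsThickLE k ↥Y (restrictDist d Y) C) ∧
        ∀ Y ∈ 𝒴, ∀ Y' ∈ 𝒴, ∃ m : ℕ, ∃ c : Fin (m + 1) → Set X,
          (∀ i, c i ∈ 𝒴) ∧ c 0 = Y ∧ c (Fin.last m) = Y' ∧
          ∀ i : Fin m, InfiniteDiam d
            ({x : X | ∃ y ∈ c i.castSucc, d x y ≤ C} ∩ c i.succ)

/-- `X` is `C`-thick of order at most `k ≥ 1` **with respect to** the collection `𝒴`. -/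
def IsThickCollection (X : Type u) (d : X → X → ℝ) (C : ℝ) (k : ℕ) (𝒴 : Set (Set X)) : Prop :=
  (∀ x : X, ∃ Y ∈ 𝒴, ∃ y ∈ Y, d x y ≤ C) ∧
  (∀ Y ∈ 𝒴, IsThickLE (k - 1) ↥Y (restrictDist d Y) C) ∧
  ∀ Y ∈ 𝒴, ∀ Y' ∈ 𝒴, ∃ m : ℕ, ∃ c : Fin (m + 1) → Set X,
    (∀ i, c i ∈ 𝒴) ∧ c 0 = Y ∧ c (Fin.last m) = Y' ∧
    ∀ i : Fin m, InfiniteDiam d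
      ({x : X | ∃ y ∈ c i.castSucc, d x y ≤ C} ∩ c i.succ)

/-- The path metric of a graph, as a real-valued distance function on the vertices. -/
noncomputable def graphDist (G : SimpleGraph V) : V → V → ℝ :=
  fun x y => (G.dist x y : ℝ)

/-- The Cayley graph of a group with respect to a generating set `S`: vertices are group
elements, with an edge joining `g` and `g * s` for each `g` and each `s ∈ S \ {1}`. -/
def cayleyGraph (Γ : Type u) [Group Γ] (S : Set Γ) : SimpleGraph Γ :=
  SimpleGraph.fromRel fun g h => ∃ s ∈ S, h = g * s

/-!
Write `|·|` for word length (in `A` and `B` with respect to the projections of `S`), `L` for a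
bound on the lengths in `Cay(A × B, S)` of the `(s.1, 1)` and `(1, s.2)`, `s ∈ S`, and
`m = max |x.1| |x.2|`. Geodesics `(aᵢ)` in `A` and `(bᵢ)` in `B` give a staircase `(aᵢ, bᵢ)`, and
`x` is joined to `(aₘ, bₘ)` by a horizontal and a vertical path of length `O(m)`. Each of them runs
in a coset of one factor whose other coordinate has length about `m`, so it avoids the ball of
radius `m - L` about `1` and has Floyd length `O(m f(m - L))`. Climbing the staircase from level `i`
to level `i + 1` costs `O(f(i - L))`, so climbing it from level `m` costs at most a tail of `∑ f`.
As `f` is decreasing and summable, `n f(n) → 0`: points far from `1` are uniformly Floyd-close, so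
all escaping Floyd-Cauchy sequences define the same boundary point.
-/

open SimpleGraph

theorem cayleyGraph_eq_mulCayley {Γ : Type u} [Group Γ] (S : Set Γ) :
    cayleyGraph Γ S = mulCayley S := by
  ext g h
  simp [cayleyGraph, mulCayley, eq_comm]

section FloydLength

variable {G : SimpleGraph V} {f : ℕ → ℝ} {b : V}

theorem floydLength_append {u v w : V} (p : G.Walk u v) (q : G.Walk v w) :
    floydLength G f b (p.append q) = floydLength G f b p + floydLength G f b q := by
  simp [floydLength, Walk.darts_append]

theorem floydLength_reverse {u v : V} (p : G.Walk u v) :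
    floydLength G f b p.reverse = floydLength G f b p := by
  have symm (d : G.Dart) : edgeFloydLength G f b d.symm = edgeFloydLength G f b d := by
    simp [edgeFloydLength, min_comm]
  simp [floydLength, Walk.darts_reverse, List.sum_reverse, Function.comp_def, symm]

theorem floydLength_copy {u v u' v' : V} (p : G.Walk u v) (hu : u = u') (hv : v = v') :
    floydLength G f b (p.copy hu hv) = floydLength G f b p := by
  subst hu hv
  rfl

theorem floydLength_le_of_forall_mem_support (hf : Antitone f) {u v : V} (p : G.Walk u v)
    {D : ℕ} (hD : ∀ x ∈ p.support, D ≤ G.dist b x) :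
    floydLength G f b p ≤ p.length * f D := by
  rw [floydLength, ← Walk.length_darts, ← List.length_map (f := edgeFloydLength G f b),
    ← nsmul_eq_mul]
  refine List.sum_le_card_nsmul _ _ fun x hx => ?_
  obtain ⟨d, hd, rfl⟩ := List.mem_map.1 hx
  exact hf (le_min (hD _ (p.dart_fst_mem_support_of_mem_darts hd))
    (hD _ (p.dart_snd_mem_support_of_mem_darts hd)))

theorem floydLength_nonneg (hf : ∀ n, 0 ≤ f n) {u v : V} (p : G.Walk u v) :
    0 ≤ floydLength G f b p :=
  List.sum_nonneg fun x hx => by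
    obtain ⟨d, -, rfl⟩ := List.mem_map.1 hx
    exact hf _

theorem floydDist_nonneg (hf : ∀ n, 0 ≤ f n) (u v : V) : 0 ≤ floydDist G f b u v :=
  Real.sInf_nonneg <| by rintro _ ⟨p, rfl⟩; exact floydLength_nonneg hf p

theorem floydDist_le_floydLength (hf : ∀ n, 0 ≤ f n) {u v : V} (p : G.Walk u v) :
    floydDist G f b u v ≤ floydLength G f b p :=
  csInf_le ⟨0, by rintro _ ⟨q, rfl⟩; exact floydLength_nonneg hf q⟩ ⟨p, rfl⟩

end FloydLength

section Boundary

variable {G : SimpleGraph V} {f : ℕ → ℝ} {b : V}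

theorem Escapes.eventually_le {s : ℕ → V} (hs : Escapes G b s) (R : ℕ) :
    ∀ᶠ n in atTop, R ≤ G.dist b (s n) :=
  let ⟨N, hN⟩ := hs R
  eventually_atTop.2 ⟨N, fun m hm => (hN m hm).le⟩

theorem floydBoundaryOnePoint_of_floydDist_lt (hf : ∀ n, 0 ≤ f n) {σ : ℕ → V}
    (hσ : Escapes G b σ)
    (h : ∀ ε > 0, ∃ R, ∀ x y, R ≤ G.dist b x → R ≤ G.dist b y → floydDist G f b x y < ε) :
    FloydBoundaryOnePoint G f b := by
  have tendsto (s t : ℕ → V) (hs : Escapes G b s) (ht : Escapes G b t) :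
      Tendsto (fun n => floydDist G f b (s n) (t n)) atTop (nhds 0) := by
    refine Metric.tendsto_nhds.2 fun ε hε => ?_
    obtain ⟨R, hR⟩ := h ε hε
    filter_upwards [hs.eventually_le R, ht.eventually_le R] with n hsn htn
    rw [Real.dist_0_eq_abs, abs_of_nonneg (floydDist_nonneg hf _ _)]
    exact hR _ _ hsn htn
  have cauchy : IsFloydCauchy G f b σ := fun ε hε => by
    obtain ⟨R, hR⟩ := h ε hε
    obtain ⟨N, hN⟩ := (hσ.eventually_le R).exists_forall_of_atTop
    exact ⟨N, fun m n hm hn => hR _ _ (hN m hm) (hN n hn)⟩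
  refine ⟨Quot.mk _ ⟨σ, cauchy, hσ⟩, fun q => ?_⟩
  induction q using Quot.ind with
  | mk t => exact Quot.sound (tendsto t.1 σ t.2.2 hσ)

end Boundary

section FloydFunction

variable {f : ℕ → ℝ}

theorem IsFloydFunction.antitone (hf : IsFloydFunction f) : Antitone f := by
  obtain ⟨K, -, hK⟩ := hf.ratio
  refine antitone_nat_of_succ_le fun n => ?_
  rcases n with _ | n
  · exact hf.zero_eq.ge
  · have := (hK (n + 1) n.succ_pos).1
    rwa [one_le_div (hf.pos _)] at this

theorem IsFloydFunction.summable_self (hf : IsFloydFunction f) : Summable f :=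
  (summable_nat_add_iff 1).1 hf.summable

theorem sum_Ico_le_tsum_add (hf0 : ∀ n, 0 ≤ f n) (hs : Summable f) {L m : ℕ} (hLm : L ≤ m)
    (M : ℕ) : ∑ i ∈ Finset.Ico m M, f (i - L) ≤ ∑' k, f (k + (m - L)) := by
  rw [Finset.sum_Ico_eq_sum_range]
  calc ∑ k ∈ Finset.range (M - m), f (m + k - L)
      = ∑ k ∈ Finset.range (M - m), f (k + (m - L)) :=
        Finset.sum_congr rfl fun k _ => by rw [show m + k - L = k + (m - L) by omega]
    _ ≤ _ := ((summable_nat_add_iff (m - L)).2 hs).sum_le_tsum _ fun k _ => hf0 _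

theorem tendsto_nat_mul_of_antitone_of_summable (hf : Antitone f) (hs : Summable f) :
    Tendsto (fun n : ℕ => n * f n) atTop (nhds 0) := by
  have hf0 (n : ℕ) : 0 ≤ f n :=
    le_of_tendsto hs.tendsto_atTop_zero (eventually_atTop.2 ⟨n, fun m hm => hf hm⟩)
  -- `n f(n) ≤ 2 (n - n/2) f(n)`, and the last `n - n/2` terms of the series are each `≥ f(n)`
  have bound (n : ℕ) : n * f n ≤ 2 * ∑' k, f (k + n / 2) := by
    have hsum : ((n - n / 2 : ℕ) : ℝ) * f n ≤ ∑ i ∈ Finset.Ico (n / 2) n, f i := by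
      rw [← Nat.card_Ico, ← nsmul_eq_mul]
      exact Finset.card_nsmul_le_sum _ _ _ fun i hi => hf (Finset.mem_Ico.1 hi).2.le
    have hn : (n : ℝ) ≤ 2 * ((n - n / 2 : ℕ) : ℝ) := by norm_cast; omega
    have := sum_Ico_le_tsum_add hf0 hs (Nat.zero_le (n / 2)) n
    simp only [Nat.sub_zero] at this
    nlinarith [hf0 n]
  refine squeeze_zero (fun n => mul_nonneg n.cast_nonneg (hf0 n)) bound ?_
  simpa using ((tendsto_sum_nat_add f).comp (Nat.tendsto_div_const_atTop two_ne_zero)).const_mul 2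

theorem tendsto_mul_add_tsum_sub_of_antitone (hf : Antitone f) (hs : Summable f) (L : ℕ) :
    Tendsto (fun m : ℕ => m * f (m - L) + ∑' k, f (k + (m - L))) atTop (nhds 0) := by
  have h := (((tendsto_nat_mul_of_antitone_of_summable hf hs).add
    (hs.tendsto_atTop_zero.const_mul (L : ℝ))).add (tendsto_sum_nat_add f)).comp
    (tendsto_sub_atTop_nat L)
  simp only [mul_zero, add_zero] at h
  refine h.congr' (eventually_atTop.2 ⟨L, fun m hm => ?_⟩)
  simp only [Function.comp_apply, Nat.cast_sub hm]
  ring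

end FloydFunction

section Walk

variable {W : Type*} {G : SimpleGraph V} {G' : SimpleGraph W}

theorem dist_getVert_le {u v : V} (p : G.Walk u v) (n : ℕ) : G.dist u (p.getVert n) ≤ n :=
  (dist_le (p.take n)).trans (by simp)

theorem dist_le_length_of_mem_support {u v x : V} (p : G.Walk u v) (hx : x ∈ p.support) :
    G.dist u x ≤ p.length := by
  classical
  exact (dist_le (p.takeUntil x hx)).trans (p.length_takeUntil_le_length hx)

theorem dist_getVert_of_length_eq_dist {u v : V} (p : G.Walk u v) (hp : p.length = G.dist u v)
    {n : ℕ} (hn : n ≤ p.length) : G.dist u (p.getVert n) = n := by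
  have htri := (p.take n).reachable.dist_triangle_left v
  have hdrop : G.dist (p.getVert n) v ≤ p.length - n := (dist_le (p.drop n)).trans (by simp)
  have := dist_getVert_le p n
  omega

theorem exists_walk_length_le_of_adj_or_eq (F : V → W)
    (hF : ∀ x y, G.Adj x y → F x = F y ∨ G'.Adj (F x) (F y)) {u v : V} (p : G.Walk u v) :
    ∃ q : G'.Walk (F u) (F v), q.length ≤ p.length := by
  induction p with
  | nil => exact ⟨.nil, le_rfl⟩
  | cons hadj p ih =>
    obtain ⟨q, hq⟩ := ih
    rcases hF _ _ hadj with heq | hadj'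
    · exact ⟨q.copy heq.symm rfl, by simp only [Walk.length_copy, Walk.length_cons]; omega⟩
    · exact ⟨.cons hadj' q, by simpa using hq⟩

end Walk

section Cayley

variable {Γ : Type*} [Group Γ] {S : Set Γ}

def mulCayleyMulLeft (S : Set Γ) (g : Γ) : mulCayley S →g mulCayley S :=
  ⟨(g * ·), mulCayley_adj_mul_iff_right.2⟩

@[simp]
theorem mulCayleyMulLeft_apply (S : Set Γ) (g x : Γ) : mulCayleyMulLeft S g x = g * x :=
  rfl

theorem mulCayley_connected (hS : Subgroup.closure S = ⊤) : (mulCayley S).Connected := by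
  have reach (g : Γ) : (mulCayley S).Reachable 1 g := by
    induction (hS ▸ Subgroup.mem_top g : g ∈ Subgroup.closure S) using Subgroup.closure_induction
      with
    | mem x hx =>
      by_cases h1 : 1 = x
      · rw [← h1]
      · exact ((mulCayley_adj S 1 x).2 ⟨h1, Or.inl (by simpa using hx)⟩).reachable
    | one => rfl
    | mul x y _ _ hx hy => exact hx.trans (by simpa using hy.map (mulCayleyMulLeft S x))
    | inv x _ hx =>
      have := hx.map (mulCayleyMulLeft S x⁻¹)
      simp only [mulCayleyMulLeft_apply, mul_one, inv_mul_cancel] at this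
      exact this.symm
  exact (connected_iff _).2 ⟨fun x y => (reach x).symm.trans (reach y), ⟨1⟩⟩

theorem mulCayley_dist_mul_left (hS : Subgroup.closure S = ⊤) (g x y : Γ) :
    (mulCayley S).dist (g * x) (g * y) = (mulCayley S).dist x y := by
  have le (g x y : Γ) : (mulCayley S).dist (g * x) (g * y) ≤ (mulCayley S).dist x y := by
    obtain ⟨p, hp⟩ := (mulCayley_connected hS).exists_walk_length_eq_dist x y
    exact hp ▸ (p.length_map (mulCayleyMulLeft S g)) ▸ dist_le _
  refine le_antisymm (le g x y) ?_
  simpa using le g⁻¹ (g * x) (g * y)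

theorem mulCayley_dist_eq_dist_one (hS : Subgroup.closure S = ⊤) (x y : Γ) :
    (mulCayley S).dist x y = (mulCayley S).dist 1 (x⁻¹ * y) := by
  simpa using (mulCayley_dist_mul_left hS x⁻¹ x y).symm

theorem mulCayley_dist_one_inv (hS : Subgroup.closure S = ⊤) (x : Γ) :
    (mulCayley S).dist 1 x⁻¹ = (mulCayley S).dist 1 x := by
  rw [← mul_one x⁻¹, ← mulCayley_dist_eq_dist_one hS, dist_comm]

theorem finite_setOf_mulCayley_dist_le (hS : Subgroup.closure S = ⊤) (hfin : S.Finite) (n : ℕ) :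
    {g | (mulCayley S).dist 1 g ≤ n}.Finite := by
  induction n with
  | zero => simp [(mulCayley_connected hS).dist_eq_zero_iff, eq_comm]
  | succ n ih =>
    refine (ih.mul ((hfin.union hfin.inv).insert 1)).subset fun g hg => ?_
    by_cases hgn : (mulCayley S).dist 1 g ≤ n
    · exact ⟨g, hgn, 1, Set.mem_insert _ _, mul_one g⟩
    obtain ⟨p, hp⟩ := (mulCayley_connected hS).exists_walk_length_eq_dist 1 g
    have hg : _ ≤ n + 1 := hg
    have hlen : p.length = n + 1 := by omega
    have hadj := p.adj_getVert_succ (i := n) (by omega)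
    rw [show n + 1 = p.length from hlen.symm, p.getVert_length, mulCayley_adj] at hadj
    refine ⟨p.getVert n, dist_getVert_le p n, _, Set.mem_insert_of_mem _ ?_,
      mul_inv_cancel_left _ _⟩
    rcases hadj.2 with h | h
    · exact Or.inl h
    · exact Or.inr (by simpa using h)

theorem exists_lt_mulCayley_dist [Infinite Γ] (hS : Subgroup.closure S = ⊤) (hfin : S.Finite)
    (n : ℕ) : ∃ g, n < (mulCayley S).dist 1 g := by
  by_contra! h
  exact Set.infinite_univ ((finite_setOf_mulCayley_dist_le hS hfin n).subset fun g _ => h g)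

theorem exists_walk_length_eq_dist_of_le [Infinite Γ] (hS : Subgroup.closure S = ⊤)
    (hfin : S.Finite) (M : ℕ) :
    ∃ (α : Γ) (p : (mulCayley S).Walk 1 α), p.length = (mulCayley S).dist 1 α ∧ M ≤ p.length := by
  obtain ⟨α, hα⟩ := exists_lt_mulCayley_dist hS hfin M
  obtain ⟨p, hp⟩ := (mulCayley_connected hS).exists_walk_length_eq_dist 1 α
  exact ⟨α, p, hp, by omega⟩

theorem exists_escapes [Infinite Γ] (hS : Subgroup.closure S = ⊤) (hfin : S.Finite) :
    ∃ σ : ℕ → Γ, Escapes (mulCayley S) 1 σ := by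
  choose σ hσ using exists_lt_mulCayley_dist hS hfin
  exact ⟨σ, fun n => ⟨n, fun m hm => hm.trans_lt (hσ m)⟩⟩

end Cayley

section Transfer

variable {Γ : Type u} {H K : Type*} [Group Γ] [Group H] [Group K] {S : Set Γ} {T : Set H}
  {U : Set K}

theorem mulCayley_dist_map_le (hS : Subgroup.closure S = ⊤) (π : Γ →* K)
    (hπ : ∀ s ∈ S, π s ∈ U) (x y : Γ) :
    (mulCayley U).dist (π x) (π y) ≤ (mulCayley S).dist x y := by
  obtain ⟨p, hp⟩ := (mulCayley_connected hS).exists_walk_length_eq_dist x y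
  have hF (x y : Γ) (h : (mulCayley S).Adj x y) : π x = π y ∨ (mulCayley U).Adj (π x) (π y) := by
    rw [mulCayley_adj] at h ⊢
    by_cases hxy : π x = π y
    · exact Or.inl hxy
    · refine Or.inr ⟨hxy, ?_⟩
      simpa only [← map_inv, ← map_mul] using h.2.imp (hπ _) (hπ _)
  obtain ⟨q, hq⟩ := exists_walk_length_le_of_adj_or_eq π hF p
  exact (dist_le q).trans (hp ▸ hq)

theorem mulCayley_dist_mul_map_le_of_adj (hS : Subgroup.closure S = ⊤) (φ : H →* Γ) {L : ℕ}
    (hL : ∀ t ∈ T, (mulCayley S).dist 1 (φ t) ≤ L) (g : Γ) {h h' : H}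
    (hadj : (mulCayley T).Adj h h') : (mulCayley S).dist (g * φ h) (g * φ h') ≤ L := by
  rw [mulCayley_dist_eq_dist_one hS, mul_inv_rev, mul_assoc, inv_mul_cancel_left, ← map_inv,
    ← map_mul]
  rcases ((mulCayley_adj T h h').1 hadj).2 with ht | ht
  · exact hL _ ht
  · rw [← mulCayley_dist_one_inv hS, ← map_inv, mul_inv_rev, inv_inv]
    exact hL _ ht

theorem exists_walk_mul_map (hS : Subgroup.closure S = ⊤) (φ : H →* Γ) {L : ℕ}
    (hL : ∀ t ∈ T, (mulCayley S).dist 1 (φ t) ≤ L) (g : Γ) {h h' : H}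
    (q : (mulCayley T).Walk h h') :
    ∃ p : (mulCayley S).Walk (g * φ h) (g * φ h'), p.length ≤ L * q.length ∧
      ∀ v ∈ p.support, ∃ k, (mulCayley S).dist (g * φ k) v ≤ L := by
  induction q with
  | @nil h₀ =>
    refine ⟨.nil, by simp, fun v hv => ⟨h₀, ?_⟩⟩
    simp [(Walk.mem_support_nil_iff).1 hv]
  | @cons h₀ h₁ _ hadj q ih =>
    obtain ⟨p, hp, hsupp⟩ := ih
    have hstep := mulCayley_dist_mul_map_le_of_adj hS φ hL g hadj
    obtain ⟨r, hr⟩ := (mulCayley_connected hS).exists_walk_length_eq_dist (g * φ h₀) (g * φ h₁)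
    refine ⟨r.append p, by simp only [Walk.length_append, Walk.length_cons]; nlinarith, ?_⟩
    intro v hv
    rcases (Walk.mem_support_append_iff r p).1 hv with hv | hv
    · exact ⟨h₀, (dist_le_length_of_mem_support r hv).trans (hr ▸ hstep)⟩
    · exact hsupp v hv

theorem mulCayley_dist_map_le_mul (hS : Subgroup.closure S = ⊤) (hT : Subgroup.closure T = ⊤)
    (φ : H →* Γ) {L : ℕ} (hL : ∀ t ∈ T, (mulCayley S).dist 1 (φ t) ≤ L) (h h' : H) :
    (mulCayley S).dist (φ h) (φ h') ≤ L * (mulCayley T).dist h h' := by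
  obtain ⟨q, hq⟩ := (mulCayley_connected hT).exists_walk_length_eq_dist h h'
  obtain ⟨p, hp, -⟩ := exists_walk_mul_map hS φ hL 1 q
  simpa [hq] using (dist_le p).trans hp

theorem exists_walk_mul_map_floydLength_le (hS : Subgroup.closure S = ⊤)
    (hT : Subgroup.closure T = ⊤) (hU : Subgroup.closure U = ⊤) {φ : H →* Γ} {π : Γ →* K}
    (hπφ : ∀ h, π (φ h) = 1) (hπ : ∀ s ∈ S, π s ∈ U) {L : ℕ}
    (hL : ∀ t ∈ T, (mulCayley S).dist 1 (φ t) ≤ L) {f : ℕ → ℝ} (hf : Antitone f)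
    (hf0 : ∀ n, 0 ≤ f n) (g : Γ) {h h' : H} {ℓ D : ℕ} (hℓ : (mulCayley T).dist h h' ≤ ℓ)
    (hD : D ≤ (mulCayley U).dist 1 (π g) - L) :
    ∃ p : (mulCayley S).Walk (g * φ h) (g * φ h'),
      floydLength (mulCayley S) f 1 p ≤ (L * ℓ : ℕ) * f D := by
  obtain ⟨q, hq⟩ := (mulCayley_connected hT).exists_walk_length_eq_dist h h'
  obtain ⟨p, hp, hsupp⟩ := exists_walk_mul_map hS φ hL g q
  refine ⟨p, (floydLength_le_of_forall_mem_support (D := D) hf p fun v hv => ?_).trans ?_⟩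
  · -- `v` is `L`-close to `g * φ k`, and `π` is `1`-Lipschitz with `π (g * φ k) = π g`
    obtain ⟨k, hk⟩ := hsupp v hv
    have hπg : π (g * φ k) = π g := by rw [map_mul, hπφ, mul_one]
    have h₁ := mulCayley_dist_map_le hS π hπ 1 v
    have h₂ := mulCayley_dist_map_le hS π hπ (g * φ k) v
    have htri := (mulCayley_connected hU).dist_triangle (u := 1) (v := π v) (w := π g)
    rw [map_one] at h₁
    rw [hπg, dist_comm] at h₂
    omega
  · gcongr
    · exact hf0 D
    · exact_mod_cast hp.trans (Nat.mul_le_mul_left L (hq ▸ hℓ))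

end Transfer

section Product

variable {A B : Type u} [Group A] [Group B] {S : Set (A × B)} {L : ℕ} {f : ℕ → ℝ}

theorem closure_image_fst (hS : Subgroup.closure S = ⊤) :
    Subgroup.closure (Prod.fst '' S) = ⊤ := by
  rw [← MonoidHom.coe_fst, ← MonoidHom.map_closure, hS, ← MonoidHom.range_eq_map,
    MonoidHom.range_eq_top]
  exact Prod.fst_surjective

theorem closure_image_snd (hS : Subgroup.closure S = ⊤) :
    Subgroup.closure (Prod.snd '' S) = ⊤ := by
  rw [← MonoidHom.coe_snd, ← MonoidHom.map_closure, hS, ← MonoidHom.range_eq_map,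
    MonoidHom.range_eq_top]
  exact Prod.snd_surjective

theorem exists_horizontal_walk (hS : Subgroup.closure S = ⊤)
    (hLA : ∀ s ∈ S, (mulCayley S).dist 1 (s.1, 1) ≤ L) (hf : Antitone f) (hf0 : ∀ n, 0 ≤ f n)
    (b : B) {a a' : A} {ℓ D : ℕ} (hℓ : (mulCayley (Prod.fst '' S)).dist a a' ≤ ℓ)
    (hD : D ≤ (mulCayley (Prod.snd '' S)).dist 1 b - L) :
    ∃ p : (mulCayley S).Walk (a, b) (a', b),
      floydLength (mulCayley S) f 1 p ≤ (L * ℓ : ℕ) * f D := by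
  obtain ⟨p, hp⟩ := exists_walk_mul_map_floydLength_le hS (closure_image_fst hS)
    (closure_image_snd hS) (φ := MonoidHom.inl A B) (π := MonoidHom.snd A B) (fun _ => rfl)
    (fun s hs => ⟨s, hs, rfl⟩) (by rintro _ ⟨s, hs, rfl⟩; exact hLA s hs) hf hf0 (1, b) hℓ hD
  exact ⟨p.copy (by simp) (by simp), by rwa [floydLength_copy]⟩

theorem exists_vertical_walk (hS : Subgroup.closure S = ⊤)
    (hLB : ∀ s ∈ S, (mulCayley S).dist 1 (1, s.2) ≤ L) (hf : Antitone f) (hf0 : ∀ n, 0 ≤ f n)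
    (a : A) {b b' : B} {ℓ D : ℕ} (hℓ : (mulCayley (Prod.snd '' S)).dist b b' ≤ ℓ)
    (hD : D ≤ (mulCayley (Prod.fst '' S)).dist 1 a - L) :
    ∃ p : (mulCayley S).Walk (a, b) (a, b'),
      floydLength (mulCayley S) f 1 p ≤ (L * ℓ : ℕ) * f D := by
  obtain ⟨p, hp⟩ := exists_walk_mul_map_floydLength_le hS (closure_image_snd hS)
    (closure_image_fst hS) (φ := MonoidHom.inr A B) (π := MonoidHom.fst A B) (fun _ => rfl)
    (fun s hs => ⟨s, hs, rfl⟩) (by rintro _ ⟨s, hs, rfl⟩; exact hLB s hs) hf hf0 (a, 1) hℓ hD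
  exact ⟨p.copy (by simp) (by simp), by rwa [floydLength_copy]⟩

theorem mulCayley_prod_dist_one_le (hS : Subgroup.closure S = ⊤)
    (hLA : ∀ s ∈ S, (mulCayley S).dist 1 (s.1, 1) ≤ L)
    (hLB : ∀ s ∈ S, (mulCayley S).dist 1 (1, s.2) ≤ L) (x : A × B) :
    (mulCayley S).dist 1 x ≤
      L * ((mulCayley (Prod.fst '' S)).dist 1 x.1 + (mulCayley (Prod.snd '' S)).dist 1 x.2) := by
  have hA := mulCayley_dist_map_le_mul hS (closure_image_fst hS) (MonoidHom.inl A B)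
    (by rintro _ ⟨s, hs, rfl⟩; exact hLA s hs) 1 x.1
  have hB := mulCayley_dist_map_le_mul hS (closure_image_snd hS) (MonoidHom.inr A B)
    (by rintro _ ⟨s, hs, rfl⟩; exact hLB s hs) 1 x.2
  have htri := (mulCayley_connected hS).dist_triangle (u := 1) (v := (x.1, 1)) (w := x)
  rw [mulCayley_dist_eq_dist_one hS (x.1, 1)] at htri
  simp only [map_one, MonoidHom.inl_apply, MonoidHom.inr_apply] at hA hB
  have : ((x.1, 1) : A × B)⁻¹ * x = (1, x.2) := by ext <;> simp
  rw [this] at htri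
  nlinarith

section Ladder

variable {α : A} {β : B} (pA : (mulCayley (Prod.fst '' S)).Walk 1 α)
  (pB : (mulCayley (Prod.snd '' S)).Walk 1 β)

theorem exists_ladder_walk (hS : Subgroup.closure S = ⊤)
    (hLA : ∀ s ∈ S, (mulCayley S).dist 1 (s.1, 1) ≤ L)
    (hLB : ∀ s ∈ S, (mulCayley S).dist 1 (1, s.2) ≤ L) (hf : Antitone f) (hf0 : ∀ n, 0 ≤ f n)
    (hpA : pA.length = (mulCayley (Prod.fst '' S)).dist 1 α)
    (hpB : pB.length = (mulCayley (Prod.snd '' S)).dist 1 β) {n M : ℕ} (hnM : n ≤ M)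
    (hA : M ≤ pA.length) (hB : M ≤ pB.length) :
    ∃ p : (mulCayley S).Walk (pA.getVert n, pB.getVert n) (pA.getVert M, pB.getVert M),
      floydLength (mulCayley S) f 1 p ≤ 2 * L * ∑ i ∈ Finset.Ico n M, f (i - L) := by
  induction M, hnM using Nat.le_induction with
  | base => exact ⟨.nil, by simp [floydLength]⟩
  | succ M hnM ih =>
    obtain ⟨p, hp⟩ := ih (by omega) (by omega)
    obtain ⟨p₁, hp₁⟩ := exists_horizontal_walk hS hLA hf hf0 (pB.getVert M) (ℓ := 1)
      (D := M - L) (dist_eq_one_iff_adj.2 (pA.adj_getVert_succ (i := M) (by omega))).le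
      (by rw [dist_getVert_of_length_eq_dist pB hpB (by omega)])
    obtain ⟨p₂, hp₂⟩ := exists_vertical_walk hS hLB hf hf0 (pA.getVert (M + 1)) (ℓ := 1)
      (D := M - L) (dist_eq_one_iff_adj.2 (pB.adj_getVert_succ (i := M) (by omega))).le
      (by rw [dist_getVert_of_length_eq_dist pA hpA (by omega)]; omega)
    refine ⟨p.append (p₁.append p₂), ?_⟩
    rw [floydLength_append, floydLength_append, Finset.sum_Ico_succ_top hnM]
    push_cast at hp₁ hp₂
    linarith

theorem exists_corner_walk (hS : Subgroup.closure S = ⊤)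
    (hLA : ∀ s ∈ S, (mulCayley S).dist 1 (s.1, 1) ≤ L)
    (hLB : ∀ s ∈ S, (mulCayley S).dist 1 (1, s.2) ≤ L) (hf : Antitone f) (hf0 : ∀ n, 0 ≤ f n)
    (hpA : pA.length = (mulCayley (Prod.fst '' S)).dist 1 α)
    (hpB : pB.length = (mulCayley (Prod.snd '' S)).dist 1 β) (x : A × B) {m : ℕ}
    (hm : max ((mulCayley (Prod.fst '' S)).dist 1 x.1) ((mulCayley (Prod.snd '' S)).dist 1 x.2)
      = m) (hA : m ≤ pA.length) (hB : m ≤ pB.length) :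
    ∃ p : (mulCayley S).Walk x (pA.getVert m, pB.getVert m),
      floydLength (mulCayley S) f 1 p ≤ 4 * L * m * f (m - L) := by
  have hαm := dist_getVert_of_length_eq_dist pA hpA hA
  have hβm := dist_getVert_of_length_eq_dist pB hpB hB
  have hdA : (mulCayley (Prod.fst '' S)).dist x.1 (pA.getVert m) ≤ 2 * m := by
    have := (mulCayley_connected (closure_image_fst hS)).dist_triangle (u := x.1) (v := 1)
      (w := pA.getVert m)
    rw [dist_comm (u := x.1) (v := 1)] at this
    omega
  have hdB : (mulCayley (Prod.snd '' S)).dist x.2 (pB.getVert m) ≤ 2 * m := by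
    have := (mulCayley_connected (closure_image_snd hS)).dist_triangle (u := x.2) (v := 1)
      (w := pB.getVert m)
    rw [dist_comm (u := x.2) (v := 1)] at this
    omega
  suffices ∃ p : (mulCayley S).Walk x (pA.getVert m, pB.getVert m),
      floydLength (mulCayley S) f 1 p ≤
        (L * (2 * m) : ℕ) * f (m - L) + (L * (2 * m) : ℕ) * f (m - L) by
    obtain ⟨p, hp⟩ := this
    exact ⟨p, hp.trans_eq (by push_cast; ring)⟩
  rcases le_total ((mulCayley (Prod.fst '' S)).dist 1 x.1)
    ((mulCayley (Prod.snd '' S)).dist 1 x.2) with h | h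
  · obtain ⟨p₁, hp₁⟩ := exists_horizontal_walk hS hLA hf hf0 x.2 hdA (D := m - L) (by omega)
    obtain ⟨p₂, hp₂⟩ := exists_vertical_walk hS hLB hf hf0 (pA.getVert m) hdB (D := m - L)
      (by omega)
    exact ⟨p₁.append p₂, by rw [floydLength_append]; linarith⟩
  · obtain ⟨p₁, hp₁⟩ := exists_vertical_walk hS hLB hf hf0 x.1 hdB (D := m - L) (by omega)
    obtain ⟨p₂, hp₂⟩ := exists_horizontal_walk hS hLA hf hf0 (pB.getVert m) hdA (D := m - L)
      (by omega)
    exact ⟨p₁.append p₂, by rw [floydLength_append]; linarith⟩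

theorem exists_walk_to_ladder_top (hS : Subgroup.closure S = ⊤)
    (hLA : ∀ s ∈ S, (mulCayley S).dist 1 (s.1, 1) ≤ L)
    (hLB : ∀ s ∈ S, (mulCayley S).dist 1 (1, s.2) ≤ L) (hf : Antitone f) (hf0 : ∀ n, 0 ≤ f n)
    (hs : Summable f) (hpA : pA.length = (mulCayley (Prod.fst '' S)).dist 1 α)
    (hpB : pB.length = (mulCayley (Prod.snd '' S)).dist 1 β) (x : A × B) {m M : ℕ}
    (hm : max ((mulCayley (Prod.fst '' S)).dist 1 x.1) ((mulCayley (Prod.snd '' S)).dist 1 x.2)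
      = m) (hLm : L ≤ m) (hmM : m ≤ M) (hA : M ≤ pA.length) (hB : M ≤ pB.length) :
    ∃ p : (mulCayley S).Walk x (pA.getVert M, pB.getVert M),
      floydLength (mulCayley S) f 1 p ≤ 4 * L * (m * f (m - L) + ∑' k, f (k + (m - L))) := by
  obtain ⟨p₁, hp₁⟩ := exists_corner_walk pA pB hS hLA hLB hf hf0 hpA hpB x hm (by omega) (by omega)
  obtain ⟨p₂, hp₂⟩ := exists_ladder_walk pA pB hS hLA hLB hf hf0 hpA hpB hmM hA hB
  refine ⟨p₁.append p₂, ?_⟩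
  have htail := sum_Ico_le_tsum_add hf0 hs hLm M
  have htail0 : 0 ≤ ∑' k, f (k + (m - L)) := tsum_nonneg fun k => hf0 _
  rw [floydLength_append]
  nlinarith

end Ladder

theorem exists_generator_bound (hfin : S.Finite) :
    ∃ L, 1 ≤ L ∧ (∀ s ∈ S, (mulCayley S).dist 1 (s.1, 1) ≤ L) ∧
      ∀ s ∈ S, (mulCayley S).dist 1 (1, s.2) ≤ L := by
  obtain ⟨N, hN⟩ := (hfin.image fun s =>
    (mulCayley S).dist 1 (s.1, 1) + (mulCayley S).dist 1 (1, s.2)).bddAbove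
  have hN' (s) (hs : s ∈ S) :
      (mulCayley S).dist 1 (s.1, 1) + (mulCayley S).dist 1 (1, s.2) ≤ N :=
    hN ⟨s, hs, rfl⟩
  exact ⟨N + 1, by omega, fun s hs => by have := hN' s hs; omega,
    fun s hs => by have := hN' s hs; omega⟩

theorem le_max_dist_of_mul_le_dist (hS : Subgroup.closure S = ⊤) (hL1 : 1 ≤ L)
    (hLA : ∀ s ∈ S, (mulCayley S).dist 1 (s.1, 1) ≤ L)
    (hLB : ∀ s ∈ S, (mulCayley S).dist 1 (1, s.2) ≤ L) {K : ℕ} {z : A × B}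
    (hz : 2 * L * K ≤ (mulCayley S).dist 1 z) :
    K ≤ max ((mulCayley (Prod.fst '' S)).dist 1 z.1) ((mulCayley (Prod.snd '' S)).dist 1 z.2) := by
  refine Nat.le_of_mul_le_mul_left ?_ (by omega : 0 < 2 * L)
  calc 2 * L * K ≤ (mulCayley S).dist 1 z := hz
    _ ≤ L * ((mulCayley (Prod.fst '' S)).dist 1 z.1 + (mulCayley (Prod.snd '' S)).dist 1 z.2) :=
      mulCayley_prod_dist_one_le hS hLA hLB z
    _ ≤ L * (2 * max ((mulCayley (Prod.fst '' S)).dist 1 z.1)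
          ((mulCayley (Prod.snd '' S)).dist 1 z.2)) := Nat.mul_le_mul_left L (by omega)
    _ = _ := by ring

theorem exists_floydDist_lt [Infinite A] [Infinite B] (hS : Subgroup.closure S = ⊤)
    (hfin : S.Finite) (hf : Antitone f) (hf0 : ∀ n, 0 ≤ f n) (hs : Summable f) {ε : ℝ}
    (hε : 0 < ε) :
    ∃ R, ∀ x y, R ≤ (mulCayley S).dist 1 x → R ≤ (mulCayley S).dist 1 y →
      floydDist (mulCayley S) f 1 x y < ε := by
  obtain ⟨L, hL1, hLA, hLB⟩ := exists_generator_bound hfin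
  have hε' : 0 < ε / (8 * L) := by positivity
  obtain ⟨K, hK⟩ := (((tendsto_mul_add_tsum_sub_of_antitone hf hs L).eventually
    (gt_mem_nhds hε')).and (eventually_ge_atTop L)).exists_forall_of_atTop
  refine ⟨2 * L * K, fun x y hx hy => ?_⟩
  obtain ⟨hcx, hLx⟩ := hK _ (le_max_dist_of_mul_le_dist hS hL1 hLA hLB hx)
  obtain ⟨hcy, hLy⟩ := hK _ (le_max_dist_of_mul_le_dist hS hL1 hLA hLB hy)
  set M := max (max ((mulCayley (Prod.fst '' S)).dist 1 x.1)
      ((mulCayley (Prod.snd '' S)).dist 1 x.2))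
    (max ((mulCayley (Prod.fst '' S)).dist 1 y.1) ((mulCayley (Prod.snd '' S)).dist 1 y.2))
  obtain ⟨α, pA, hpA, hMA⟩ := exists_walk_length_eq_dist_of_le (closure_image_fst hS)
    (hfin.image _) M
  obtain ⟨β, pB, hpB, hMB⟩ := exists_walk_length_eq_dist_of_le (closure_image_snd hS)
    (hfin.image _) M
  obtain ⟨px, hpx⟩ := exists_walk_to_ladder_top pA pB hS hLA hLB hf hf0 hs hpA hpB x rfl hLx
    (le_max_left _ _) hMA hMB
  obtain ⟨py, hpy⟩ := exists_walk_to_ladder_top pA pB hS hLA hLB hf hf0 hs hpA hpB y rfl hLy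
    (le_max_right _ _) hMA hMB
  have hL0 : (0 : ℝ) < 4 * L := by positivity
  have hhalf : 4 * L * (ε / (8 * L)) = ε / 2 := by field_simp; ring
  calc floydDist (mulCayley S) f 1 x y
      ≤ floydLength (mulCayley S) f 1 (px.append py.reverse) := floydDist_le_floydLength hf0 _
    _ = floydLength (mulCayley S) f 1 px + floydLength (mulCayley S) f 1 py := by
      rw [floydLength_append, floydLength_reverse]
    _ < ε := by nlinarith [mul_lt_mul_of_pos_left hcx hL0, mul_lt_mul_of_pos_left hcy hL0]

end Product

/-- Let `A` and `B` be infinite finitely generated groups and let `G = A × B` with a finite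
generating set `S`. Then for every Floyd function `f` the Floyd boundary of the Cayley graph
`Cay(G,S)`, based at the identity, consists of exactly one point. -/
theorem floyd_boundary_of_product_one_point
    {A B : Type u} [Group A] [Group B] [Infinite A] [Infinite B]
    (S : Finset (A × B)) (hgen : Subgroup.closure (S : Set (A × B)) = ⊤)
    (f : ℕ → ℝ) (hf : IsFloydFunction f) :
    FloydBoundaryOnePoint (cayleyGraph (A × B) (S : Set (A × B))) f 1 := by
  have hf0 (n : ℕ) : 0 ≤ f n := (hf.pos n).le
  obtain ⟨σ, hσ⟩ := exists_escapes hgen S.finite_toSet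
  rw [cayleyGraph_eq_mulCayley]
  exact floydBoundaryOnePoint_of_floydDist_lt hf0 hσ fun ε hε =>
    exists_floydDist_lt hgen S.finite_toSet hf.antitone hf0 hf.summable_self hε

end FloydPaper
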